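/- Let G be a finite group and 1 ≠ g ∈ K(G). Then (1/(|G|·b(G)))·|{x ∈ G : g ∈ [x,G]}| ≤ Pr_g(G) ≤ (1/|G|)·Σ_{x ∈ G\Z(G)} 1/|x^G|. -/

import Mathlib

/-- Probability that a pair of elements has commutator equal to `g`. -/
noncomputable def Prg (G : Type*) [Group G] (g : G) : ℚ :=
  (Nat.card {p : G × G // p.1⁻¹ * p.2⁻¹ * p.1 * p.2 = g} : ℚ) / (Nat.card G : ℚ) ^ 2

/-- The size of the largest conjugacy class. -/
noncomputable def bG (G : Type*) [Group G] [Fintype G] : ℕ :=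
  Finset.univ.sup fun x : G => Nat.card {z : G // IsConj x z}

attribute [local instance] Classical.propDecidable

/-!
Counting pairs by their first coordinate, `|G|² Pr_g(G) = ∑ₓ |{y : [x, y] = g}|`. If `[x, y₀] = g`,
then `[x, y] = g` exactly when `y y₀⁻¹` centralizes `x`, so a nonempty fibre is a coset of `C_G(x)`
and has `|G| / |x^G|` elements, which is at least `|G| / b(G)`. For central `x` the fibre is
empty because `g ≠ 1`. Summing these pointwise estimates over `x` gives both bounds.
-/

open Subgroup

theorem Nat.card_subtype_prod_eq_sum {α β : Type*} [Fintype α] [Finite β] (p : α → β → Prop) :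
    Nat.card {q : α × β // p q.1 q.2} = ∑ a, Nat.card {b // p a b} := by
  rw [Nat.card_congr (Equiv.subtypeProdEquivSigmaSubtype p), Nat.card_sigma]

section

variable {G : Type*} [Group G]

theorem card_isConj_mul_card_centralizer (x : G) :
    Nat.card {z : G // IsConj x z} * Nat.card (centralizer {x}) = Nat.card G := by
  have h := (MulAction.stabilizer (ConjAct G) x).index_mul_card
  rw [MulAction.index_stabilizer, ← nat_card_centralizer_nat_card_stabilizer,
    ← Nat.card_coe_set_eq] at h
  rwa [Nat.card_congr (Equiv.subtypeEquivRight fun z =>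
    isConj_comm.trans ConjAct.mem_orbit_conjAct.symm)]

theorem commutator_eq_commutator_iff_mem_centralizer {x y₀ : G} (y : G) :
    x⁻¹ * y⁻¹ * x * y = x⁻¹ * y₀⁻¹ * x * y₀ ↔ y * y₀⁻¹ ∈ centralizer {x} := by
  rw [mem_centralizer_singleton_iff]
  constructor
  · intro h
    calc y * y₀⁻¹ * x = y * x * (x⁻¹ * y₀⁻¹ * x * y₀) * y₀⁻¹ := by group
      _ = y * x * (x⁻¹ * y⁻¹ * x * y) * y₀⁻¹ := by rw [h]
      _ = x * (y * y₀⁻¹) := by group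
  · intro h
    calc x⁻¹ * y⁻¹ * x * y = x⁻¹ * y₀⁻¹ * (y * y₀⁻¹)⁻¹ * (x * (y * y₀⁻¹)) * y₀ := by group
      _ = x⁻¹ * y₀⁻¹ * (y * y₀⁻¹)⁻¹ * (y * y₀⁻¹ * x) * y₀ := by rw [h]
      _ = x⁻¹ * y₀⁻¹ * x * y₀ := by group

theorem card_commutatorFiber_eq_card_centralizer {x y₀ g : G} (h : x⁻¹ * y₀⁻¹ * x * y₀ = g) :
    Nat.card {y : G // x⁻¹ * y⁻¹ * x * y = g} = Nat.card (centralizer {x}) := by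
  subst h
  exact Nat.card_congr <|
    (Equiv.mulRight y₀⁻¹).subtypeEquiv commutator_eq_commutator_iff_mem_centralizer

theorem card_commutatorFiber_of_mem_center {x g : G} (hg : g ≠ 1) (hx : x ∈ center G) :
    Nat.card {y : G // x⁻¹ * y⁻¹ * x * y = g} = 0 := by
  have : IsEmpty {y : G // x⁻¹ * y⁻¹ * x * y = g} :=
    ⟨fun ⟨y, hy⟩ => hg (by rw [← hy, mul_assoc x⁻¹, mem_center_iff.mp hx y⁻¹]; group)⟩
  exact Nat.card_of_isEmpty

variable [Finite G]

theorem card_isConj_pos (x : G) : 0 < Nat.card {z : G // IsConj x z} :=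
  have : Nonempty {z : G // IsConj x z} := ⟨⟨x, .refl x⟩⟩
  Nat.card_pos

theorem card_commutatorFiber_eq_card_div {x g : G} (h : ∃ y : G, x⁻¹ * y⁻¹ * x * y = g) :
    (Nat.card {y : G // x⁻¹ * y⁻¹ * x * y = g} : ℚ) =
      Nat.card G / Nat.card {z : G // IsConj x z} := by
  obtain ⟨y₀, hy₀⟩ := h
  have := card_isConj_pos x
  rw [card_commutatorFiber_eq_card_centralizer hy₀, ← card_isConj_mul_card_centralizer x]
  push_cast
  field_simp

theorem card_commutatorFiber_le_card_div (x g : G) :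
    (Nat.card {y : G // x⁻¹ * y⁻¹ * x * y = g} : ℚ) ≤
      Nat.card G / Nat.card {z : G // IsConj x z} := by
  by_cases h : ∃ y : G, x⁻¹ * y⁻¹ * x * y = g
  · exact (card_commutatorFiber_eq_card_div h).le
  · have : IsEmpty {y : G // x⁻¹ * y⁻¹ * x * y = g} := ⟨fun ⟨y, hy⟩ => h ⟨y, hy⟩⟩
    rw [Nat.card_of_isEmpty, Nat.cast_zero]
    positivity

end

section

variable {G : Type*} [Group G] [Fintype G]

theorem Prg_eq_sum (g : G) :
    Prg G g = ∑ x : G, (Nat.card {y : G // x⁻¹ * y⁻¹ * x * y = g} : ℚ) / (Nat.card G : ℚ) ^ 2 := by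
  rw [Prg, Nat.card_subtype_prod_eq_sum (fun x y : G => x⁻¹ * y⁻¹ * x * y = g), Nat.cast_sum,
    Finset.sum_div]

theorem card_isConj_le_bG (x : G) : Nat.card {z : G // IsConj x z} ≤ bG G :=
  Finset.le_sup (f := fun x : G => Nat.card {z : G // IsConj x z}) (Finset.mem_univ x)

theorem one_div_card_mul_bG_le_card_commutatorFiber_div {x g : G}
    (h : ∃ y : G, x⁻¹ * y⁻¹ * x * y = g) :
    1 / ((Nat.card G : ℚ) * bG G) ≤
      (Nat.card {y : G // x⁻¹ * y⁻¹ * x * y = g} : ℚ) / (Nat.card G : ℚ) ^ 2 := by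
  have hk := card_isConj_pos x
  have hn : 0 < Nat.card G := Nat.card_pos
  calc 1 / ((Nat.card G : ℚ) * bG G)
        ≤ 1 / ((Nat.card G : ℚ) * Nat.card {z : G // IsConj x z}) := by
        gcongr
        exact_mod_cast card_isConj_le_bG x
    _ = _ := by
        rw [card_commutatorFiber_eq_card_div h]
        field_simp

theorem card_commutatorFiber_div_le {g : G} (hg : g ≠ 1) (x : G) :
    (Nat.card {y : G // x⁻¹ * y⁻¹ * x * y = g} : ℚ) / (Nat.card G : ℚ) ^ 2 ≤
      1 / (Nat.card G : ℚ) *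
        (if x ∈ center G then 0 else (1 : ℚ) / (Nat.card {z : G // IsConj x z} : ℚ)) := by
  split_ifs with hx
  · rw [card_commutatorFiber_of_mem_center hg hx]
    simp
  · have hn : 0 < Nat.card G := Nat.card_pos
    calc _ ≤ (Nat.card G / Nat.card {z : G // IsConj x z} : ℚ) / (Nat.card G : ℚ) ^ 2 := by
          gcongr
          exact card_commutatorFiber_le_card_div x g
      _ = _ := by field_simp

end

theorem stmt_15_general {G : Type*} [Group G] [Fintype G] (g : G) (hg1 : g ≠ 1) :
    (1 / ((Nat.card G : ℚ) * (bG G : ℚ))) *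
        (Nat.card {x : G // ∃ y : G, x⁻¹ * y⁻¹ * x * y = g} : ℚ) ≤ Prg G g ∧
      Prg G g ≤ (1 / (Nat.card G : ℚ)) *
        ∑ x : G, (if x ∈ Subgroup.center G then 0
          else (1 : ℚ) / (Nat.card {z : G // IsConj x z} : ℚ)) := by
  rw [Prg_eq_sum]
  constructor
  · rw [Nat.card_eq_fintype_card (α := {x // _}), Fintype.card_subtype, Finset.card_filter,
      Nat.cast_sum, Finset.mul_sum]
    refine Finset.sum_le_sum fun x _ => ?_
    split_ifs with h
    · simpa using one_div_card_mul_bG_le_card_commutatorFiber_div h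
    · simp only [Nat.cast_zero, mul_zero]
      positivity
  · rw [Finset.mul_sum]
    exact Finset.sum_le_sum fun x _ => card_commutatorFiber_div_le hg1 x

theorem stmt_15 {G : Type*} [Group G] [Fintype G] (g : G) (hg1 : g ≠ 1)
    (hgK : ∃ a b : G, a⁻¹ * b⁻¹ * a * b = g) :
    (1 / ((Nat.card G : ℚ) * (bG G : ℚ))) *
        (Nat.card {x : G // ∃ y : G, x⁻¹ * y⁻¹ * x * y = g} : ℚ) ≤ Prg G g ∧
      Prg G g ≤ (1 / (Nat.card G : ℚ)) *
        ∑ x : G, (if x ∈ Subgroup.center G then 0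
          else (1 : ℚ) / (Nat.card {z : G // IsConj x z} : ℚ)) :=
  stmt_15_general g hg1
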